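/- arXiv:1908.10150 — 3 statements merged into one kernel-verified Lean document; each statement's English description precedes it below -/
import Mathlib

section
/- Let A : ℝⁿ → ℝᵐ be a linear map and μ > 0 a constant such that ‖Aᵀh‖_∞ ≥ μ‖h‖₁ for all h ∈ ℝᵐ. Then A is surjective, and for every p ∈ ℝᵐ there exists w ∈ ℝⁿ with Aw = p and ‖w‖₁ ≤ ‖p‖_∞/μ. Consequently every minimal-ℓ1-norm solution w* of Aw = p satisfies ‖w*‖₁ ≤ ‖p‖_∞/μ. -/
/-!
Let `B` be the ℓ1-ball of radius `r = ‖p‖_∞ / μ`; it is compact and convex, hence so is `A '' B`.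
If `p ∉ A '' B`, Hahn–Banach separates `p` from it by a functional `y ↦ y ⬝ᵥ h`. But
`max_{w ∈ B} A w ⬝ᵥ h = max_{w ∈ B} w ⬝ᵥ Aᵀ h = r ‖Aᵀ h‖_∞ ≥ r μ ‖h‖₁ = ‖p‖_∞ ‖h‖₁ ≥ p ⬝ᵥ h`,
the maximum being attained at a signed vertex of `B`; so no functional separates them.
-/

/-- The ℓ1-norm on `ℝ^d`: `‖x‖₁ = Σᵢ |xᵢ|`. -/
noncomputable def l1Norm {d : ℕ} (x : Fin d → ℝ) : ℝ := ∑ i, |x i|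

/-- The ℓ∞-norm on `ℝ^d`: `‖x‖_∞ = maxᵢ |xᵢ|`. -/
noncomputable def linfNorm {d : ℕ} (x : Fin d → ℝ) : ℝ := ⨆ i, |x i|

/-- The transpose of a linear map `A : ℝⁿ → ℝᵐ` applied to `h ∈ ℝᵐ`:
`(Aᵀ h)ᵢ = Σⱼ Aⱼᵢ hⱼ` where `Aⱼᵢ = (A eᵢ)ⱼ`. -/
noncomputable def transposeApply {n m : ℕ} (A : (Fin n → ℝ) →ₗ[ℝ] (Fin m → ℝ))
    (h : Fin m → ℝ) : Fin n → ℝ :=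
  fun i => ∑ j, A (Pi.single i 1) j * h j

open Matrix

theorem mem_of_forall_exists_le {E : Type*} [TopologicalSpace E] [AddCommGroup E] [Module ℝ E]
    [IsTopologicalAddGroup E] [ContinuousSMul ℝ E] [LocallyConvexSpace ℝ E] {K : Set E} {p : E}
    (hconv : Convex ℝ K) (hclosed : IsClosed K) (hp : ∀ f : E →L[ℝ] ℝ, ∃ y ∈ K, f p ≤ f y) :
    p ∈ K := by
  by_contra hpK
  obtain ⟨f, u, hK, hu⟩ := geometric_hahn_banach_closed_point hconv hclosed hpK
  obtain ⟨y, hy, hfy⟩ := hp f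
  exact (hfy.trans (hK y hy).le).not_gt hu

section Norms

variable {d : ℕ}

theorem linfNorm_nonneg (x : Fin d → ℝ) : 0 ≤ linfNorm x :=
  Real.iSup_nonneg fun _ => abs_nonneg _

theorem abs_le_linfNorm (x : Fin d → ℝ) (i : Fin d) : |x i| ≤ linfNorm x :=
  le_ciSup (f := fun i => |x i|) (Set.finite_range _).bddAbove i

theorem l1Norm_eq_norm_toLp (x : Fin d → ℝ) : l1Norm x = ‖WithLp.toLp 1 x‖ := by
  simp [PiLp.norm_eq_of_L1, l1Norm]

theorem l1Norm_single (i : Fin d) (c : ℝ) : l1Norm (Pi.single i c) = |c| := by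
  simp [l1Norm, Pi.apply_single (fun _ => abs) (fun _ => abs_zero)]

theorem setOf_l1Norm_le_eq_image (r : ℝ) :
    {w : Fin d → ℝ | l1Norm w ≤ r} =
      PiLp.continuousLinearEquiv 1 ℝ (fun _ => ℝ) '' Metric.closedBall 0 r := by
  ext w
  simp only [Set.mem_ofPred_eq, Set.mem_image, Metric.mem_closedBall, dist_zero_right,
    l1Norm_eq_norm_toLp]
  exact ⟨fun hw => ⟨WithLp.toLp 1 w, hw, rfl⟩, by rintro ⟨x, hx, rfl⟩; exact hx⟩

theorem isCompact_setOf_l1Norm_le (r : ℝ) : IsCompact {w : Fin d → ℝ | l1Norm w ≤ r} := by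
  rw [setOf_l1Norm_le_eq_image]
  exact (isCompact_closedBall 0 r).image (ContinuousLinearEquiv.continuous _)

theorem convex_setOf_l1Norm_le (r : ℝ) : Convex ℝ {w : Fin d → ℝ | l1Norm w ≤ r} := by
  rw [setOf_l1Norm_le_eq_image]
  exact (convex_closedBall (0 : PiLp 1 fun _ : Fin d => ℝ) r).linear_image
    (PiLp.continuousLinearEquiv 1 ℝ (fun _ => ℝ)).toLinearMap

theorem dotProduct_le_l1Norm_mul_linfNorm (x y : Fin d → ℝ) :
    x ⬝ᵥ y ≤ l1Norm x * linfNorm y := by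
  rw [dotProduct, l1Norm, Finset.sum_mul]
  refine Finset.sum_le_sum fun i _ => ?_
  calc x i * y i ≤ |x i| * |y i| := by rw [← abs_mul]; exact le_abs_self _
    _ ≤ |x i| * linfNorm y := by gcongr; exact abs_le_linfNorm y i

theorem exists_l1Norm_le_dotProduct_eq (g : Fin d → ℝ) {r : ℝ} (hr : 0 ≤ r) :
    ∃ w : Fin d → ℝ, l1Norm w ≤ r ∧ w ⬝ᵥ g = r * linfNorm g := by
  rcases isEmpty_or_nonempty (Fin d) with hd | hd
  · exact ⟨0, by simp [l1Norm, hr], by simp [linfNorm]⟩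
  obtain ⟨i, hi⟩ := Finite.exists_max fun i => |g i|
  have hlinf : linfNorm g = |g i| := le_antisymm (ciSup_le hi) (abs_le_linfNorm g i)
  rcases le_or_gt 0 (g i) with hgi | hgi
  · refine ⟨Pi.single i r, ?_, ?_⟩
    · rw [l1Norm_single, abs_of_nonneg hr]
    · rw [single_dotProduct, hlinf, abs_of_nonneg hgi]
  · refine ⟨Pi.single i (-r), ?_, ?_⟩
    · rw [l1Norm_single, abs_neg, abs_of_nonneg hr]
    · rw [single_dotProduct, hlinf, abs_of_neg hgi, neg_mul_comm]

end Norms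

theorem ContinuousLinearMap.apply_eq_dotProduct {d : ℕ} (f : (Fin d → ℝ) →L[ℝ] ℝ)
    (x : Fin d → ℝ) : f x = x ⬝ᵥ fun j => f (Pi.single j 1) := by
  conv_lhs => rw [← Finset.univ_sum_single x]
  rw [map_sum, dotProduct]
  refine Finset.sum_congr rfl fun j _ => ?_
  rw [← smul_eq_mul, ← map_smul, ← Pi.single_smul, smul_eq_mul, mul_one]

theorem transposeApply_eq_mulVec {n m : ℕ} (A : (Fin n → ℝ) →ₗ[ℝ] (Fin m → ℝ))
    (h : Fin m → ℝ) : transposeApply A h = (LinearMap.toMatrix' A)ᵀ *ᵥ h := by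
  ext i
  simp [transposeApply, mulVec, dotProduct, LinearMap.toMatrix'_apply]

theorem apply_dotProduct_eq_dotProduct_transposeApply {n m : ℕ}
    (A : (Fin n → ℝ) →ₗ[ℝ] (Fin m → ℝ)) (w : Fin n → ℝ) (h : Fin m → ℝ) :
    A w ⬝ᵥ h = w ⬝ᵥ transposeApply A h := by
  rw [transposeApply_eq_mulVec, mulVec_transpose, dotProduct_comm, dotProduct_comm w,
    ← dotProduct_mulVec, LinearMap.toMatrix'_mulVec]

theorem exists_apply_eq_l1Norm_le {n m : ℕ} (A : (Fin n → ℝ) →ₗ[ℝ] (Fin m → ℝ)) {μ : ℝ}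
    (hμ : 0 < μ) (hA : ∀ h : Fin m → ℝ, μ * l1Norm h ≤ linfNorm (transposeApply A h))
    (p : Fin m → ℝ) : ∃ w : Fin n → ℝ, A w = p ∧ l1Norm w ≤ linfNorm p / μ := by
  set r := linfNorm p / μ
  have hr : 0 ≤ r := div_nonneg (linfNorm_nonneg p) hμ.le
  suffices p ∈ A '' {w | l1Norm w ≤ r} by
    obtain ⟨w, hw, hAw⟩ := this
    exact ⟨w, hAw, hw⟩
  refine mem_of_forall_exists_le ((convex_setOf_l1Norm_le r).linear_image A)
    ((isCompact_setOf_l1Norm_le r).image A.continuous_of_finiteDimensional).isClosed fun f => ?_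
  set h : Fin m → ℝ := fun j => f (Pi.single j 1)
  obtain ⟨w, hw, hwA⟩ := exists_l1Norm_le_dotProduct_eq (transposeApply A h) hr
  refine ⟨A w, Set.mem_image_of_mem A hw, ?_⟩
  calc f p = p ⬝ᵥ h := f.apply_eq_dotProduct p
    _ = h ⬝ᵥ p := dotProduct_comm p h
    _ ≤ l1Norm h * linfNorm p := dotProduct_le_l1Norm_mul_linfNorm h p
    _ = r * (μ * l1Norm h) := by rw [← mul_assoc, div_mul_cancel₀ _ hμ.ne', mul_comm]
    _ ≤ r * linfNorm (transposeApply A h) := mul_le_mul_of_nonneg_left (hA h) hr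
    _ = A w ⬝ᵥ h := by rw [apply_dotProduct_eq_dotProduct_transposeApply, hwA]
    _ = f (A w) := (f.apply_eq_dotProduct (A w)).symm

/-- if `‖Aᵀh‖_∞ ≥ μ‖h‖₁` for all `h`, then `A` is surjective, every
`p` has a solution `w` of `Aw = p` with `‖w‖₁ ≤ ‖p‖_∞/μ`, and consequently every
minimal-ℓ1-norm solution `w*` of `Aw = p` satisfies `‖w*‖₁ ≤ ‖p‖_∞/μ`. -/
theorem statement0 {n m : ℕ} (A : (Fin n → ℝ) →ₗ[ℝ] (Fin m → ℝ)) (μ : ℝ) (hμ : 0 < μ)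
    (hA : ∀ h : Fin m → ℝ, μ * l1Norm h ≤ linfNorm (transposeApply A h)) :
    Function.Surjective A ∧
    (∀ p : Fin m → ℝ, ∃ w : Fin n → ℝ, A w = p ∧ l1Norm w ≤ linfNorm p / μ) ∧
    (∀ p : Fin m → ℝ, ∀ wstar : Fin n → ℝ,
      A wstar = p → (∀ v : Fin n → ℝ, A v = p → l1Norm wstar ≤ l1Norm v) →
      l1Norm wstar ≤ linfNorm p / μ) := by
  have hsol := exists_apply_eq_l1Norm_le A hμ hA
  refine ⟨fun p => (hsol p).imp fun _ => And.left, hsol, fun p wstar _ hmin => ?_⟩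
  obtain ⟨w, hAw, hw⟩ := hsol p
  exact (hmin w hAw).trans hw
end

section
/- Let A be a real m×n matrix and b ∈ ℝᵐ a vector in the range of A. Then there exists a minimizer w* of ‖w‖₁ over the affine set {w ∈ ℝⁿ : Aw = b} that has at most m nonzero coordinates. -/
lemma l1Norm_continuous {d : ℕ} : Continuous (l1Norm (d := d)) :=
  continuous_finset_sum _ fun i _ => (continuous_apply i).abs

/-- Existence of an ℓ1 minimizer over the affine set. -/
lemma exists_l1_minimizer {m n : ℕ} (A : Matrix (Fin m) (Fin n) ℝ) (b : Fin m → ℝ)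
    (hb : ∃ w : Fin n → ℝ, A.mulVec w = b) :
    ∃ w : Fin n → ℝ, A.mulVec w = b ∧
      ∀ v : Fin n → ℝ, A.mulVec v = b → l1Norm w ≤ l1Norm v := by
  obtain ⟨w₀, hw₀⟩ := hb
  set C := l1Norm w₀ with hC
  set K : Set (Fin n → ℝ) := {w | A.mulVec w = b ∧ l1Norm w ≤ C} with hK
  have habs_le : ∀ w : Fin n → ℝ, ∀ i, |w i| ≤ l1Norm w := by
    intro w i
    exact Finset.single_le_sum (f := fun j => |w j|) (fun j _ => abs_nonneg _)
      (Finset.mem_univ i)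
  have hsub : K ⊆ Set.pi Set.univ (fun _ : Fin n => Set.Icc (-C) C) := by
    intro w hw i _
    have := (habs_le w i).trans hw.2
    exact ⟨by linarith [abs_le.mp this], (abs_le.mp this).2⟩
  have hcomp : IsCompact (Set.pi Set.univ (fun _ : Fin n => Set.Icc (-C) C)) :=
    isCompact_univ_pi fun _ => isCompact_Icc
  have hcontA : Continuous fun w : Fin n → ℝ => A.mulVec w := by
    have : Continuous (A.mulVecLin) := A.mulVecLin.continuous_of_finiteDimensional
    exact this
  have hclosed : IsClosed K := by
    have h1 : IsClosed {w : Fin n → ℝ | A.mulVec w = b} :=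
      isClosed_eq hcontA continuous_const
    have h2 : IsClosed {w : Fin n → ℝ | l1Norm w ≤ C} :=
      isClosed_le l1Norm_continuous continuous_const
    exact h1.inter h2
  have hKcomp : IsCompact K := hcomp.of_isClosed_subset hclosed hsub
  have hKne : K.Nonempty := ⟨w₀, hw₀, le_refl _⟩
  obtain ⟨w, hwK, hwmin⟩ := hKcomp.exists_isMinOn hKne l1Norm_continuous.continuousOn
  refine ⟨w, hwK.1, fun v hv => ?_⟩
  rcases le_or_gt (l1Norm v) C with h | h
  · exact hwmin ⟨hv, h⟩
  · exact le_trans (hwmin ⟨hw₀, le_refl _⟩) h.le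

lemma sign_mul_pos_of_mul_pos {a b : ℝ} (h : 0 < a * b) : 0 < Real.sign a * b := by
  rcases lt_trichotomy a 0 with ha | ha | ha
  · rw [Real.sign_of_neg ha]; nlinarith
  · subst ha; simp at h
  · rw [Real.sign_of_pos ha]; nlinarith

/-- Core perturbation step: given a minimizer `w` and a nonzero kernel vector `z`
supported in the support of `w` with `∑ sign(wᵢ) zᵢ ≤ 0`, we can produce a minimizer
with strictly smaller support. -/
lemma reduce_aux {m n : ℕ} (A : Matrix (Fin m) (Fin n) ℝ) (b : Fin m → ℝ)
    (w z : Fin n → ℝ) (hw : A.mulVec w = b)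
    (hmin : ∀ v : Fin n → ℝ, A.mulVec v = b → l1Norm w ≤ l1Norm v)
    (hz0 : ∀ i, z i ≠ 0 → w i ≠ 0) (hzne : z ≠ 0) (hAz : A.mulVec z = 0)
    (hc : ∑ i, Real.sign (w i) * z i ≤ 0) :
    ∃ w' : Fin n → ℝ, A.mulVec w' = b ∧
      (∀ v : Fin n → ℝ, A.mulVec v = b → l1Norm w' ≤ l1Norm v) ∧
      {i : Fin n | w' i ≠ 0} ⊂ {i : Fin n | w i ≠ 0} := by
  classical
  set T : Finset (Fin n) := Finset.univ.filter (fun i => w i * z i < 0) with hT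
  have hTne : T.Nonempty := by
    by_contra hTe
    rw [Finset.not_nonempty_iff_eq_empty] at hTe
    have hge : ∀ i, 0 ≤ w i * z i := by
      intro i
      by_contra h
      push_neg at h
      have : i ∈ T := by simp [hT, h]
      simp [hTe] at this
    obtain ⟨i₀, hi₀⟩ := Function.ne_iff.mp hzne
    simp only [Pi.zero_apply] at hi₀
    have hpos : 0 < ∑ i, Real.sign (w i) * z i := by
      apply Finset.sum_pos'
      · intro i _
        rcases eq_or_ne (z i) 0 with h | h
        · simp [h]
        · have hwi := hz0 i h
          have : 0 < w i * z i := lt_of_le_of_ne (hge i) (Ne.symm (mul_ne_zero hwi h))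
          exact (sign_mul_pos_of_mul_pos this).le
      · refine ⟨i₀, Finset.mem_univ i₀, ?_⟩
        have hwi := hz0 i₀ hi₀
        have : 0 < w i₀ * z i₀ := lt_of_le_of_ne (hge i₀) (Ne.symm (mul_ne_zero hwi hi₀))
        exact sign_mul_pos_of_mul_pos this
    linarith
  obtain ⟨a, haT, hamin⟩ := Finset.exists_min_image T (fun i => -w i / z i) hTne
  have hwza : w a * z a < 0 := by simpa [hT] using haT
  have hza : z a ≠ 0 := by
    intro h; rw [h, mul_zero] at hwza; exact lt_irrefl 0 hwza
  set t : ℝ := -w a / z a with htdef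
  have ht : 0 < t := by
    rcases lt_trichotomy (z a) 0 with h | h | h
    · have hwpos : 0 < w a := by nlinarith
      rw [htdef, div_pos_iff]
      exact Or.inr ⟨by linarith, h⟩
    · exact absurd h hza
    · have hwneg : w a < 0 := by nlinarith
      rw [htdef, div_pos_iff]
      exact Or.inl ⟨by linarith, h⟩
  set w' : Fin n → ℝ := w + t • z with hw'
  have hw'b : A.mulVec w' = b := by
    rw [hw', Matrix.mulVec_add, Matrix.mulVec_smul, hAz, hw]
    simp
  have habs : ∀ i, |w' i| = |w i| + t * (Real.sign (w i) * z i) := by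
    intro i
    have hprod : 0 ≤ w i * (w i + t * z i) := by
      rcases le_or_gt 0 (w i * z i) with h | h
      · nlinarith [sq_nonneg (w i), mul_nonneg ht.le h]
      · have hiT : i ∈ T := by simp [hT, h]
        have hle : t ≤ -w i / z i := hamin i hiT
        have hzi : z i ≠ 0 := by
          intro hz; rw [hz, mul_zero] at h; exact lt_irrefl 0 h
        have hmul : (-w i / z i) * (w i * z i) ≤ t * (w i * z i) :=
          mul_le_mul_of_nonpos_right hle h.le
        have heq : (-w i / z i) * (w i * z i) = -(w i)^2 := by field_simp
        nlinarith
    simp only [hw', Pi.add_apply, Pi.smul_apply, smul_eq_mul]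
    rcases lt_trichotomy (w i) 0 with h | h | h
    · have hnp : w i + t * z i ≤ 0 := by nlinarith
      rw [Real.sign_of_neg h, abs_of_nonpos hnp, abs_of_neg h]; ring
    · have hzi : z i = 0 := by
        by_contra hzi; exact hz0 i hzi h
      simp [h, hzi]
    · have hnn : 0 ≤ w i + t * z i := by nlinarith
      rw [Real.sign_of_pos h, abs_of_nonneg hnn, abs_of_pos h]; ring
  have hnorm : l1Norm w' ≤ l1Norm w := by
    have : l1Norm w' = l1Norm w + t * ∑ i, Real.sign (w i) * z i := by
      simp only [l1Norm]
      rw [Finset.sum_congr rfl fun i _ => habs i, Finset.sum_add_distrib,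
        ← Finset.mul_sum]
    rw [this]
    nlinarith [mul_nonpos_of_nonneg_of_nonpos ht.le hc]
  have hwa : w a ≠ 0 := by
    intro h; rw [h, zero_mul] at hwza; exact lt_irrefl 0 hwza
  have hw'a : w' a = 0 := by
    simp only [hw', Pi.add_apply, Pi.smul_apply, smul_eq_mul, htdef]
    field_simp
    ring
  have hsub : {i : Fin n | w' i ≠ 0} ⊆ {i : Fin n | w i ≠ 0} := by
    intro i hi
    simp only [Set.mem_setOf_eq] at hi ⊢
    intro hwi
    have hzi : z i = 0 := by
      by_contra hzi; exact hz0 i hzi hwi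
    apply hi
    simp [hw', hwi, hzi]
  refine ⟨w', hw'b, fun v hv => hnorm.trans (hmin v hv), ?_⟩
  rw [Set.ssubset_iff_subset_ne]
  refine ⟨hsub, fun heq => ?_⟩
  have : a ∈ {i : Fin n | w' i ≠ 0} := heq ▸ (show a ∈ {i : Fin n | w i ≠ 0} from hwa)
  exact this hw'a

/-- If a minimizer has support of size `> m`, there is a minimizer with strictly
smaller support. -/
lemma reduce {m n : ℕ} (A : Matrix (Fin m) (Fin n) ℝ) (b : Fin m → ℝ)
    (w : Fin n → ℝ) (hw : A.mulVec w = b)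
    (hmin : ∀ v : Fin n → ℝ, A.mulVec v = b → l1Norm w ≤ l1Norm v)
    (hcard : m < Set.ncard {i : Fin n | w i ≠ 0}) :
    ∃ w' : Fin n → ℝ, A.mulVec w' = b ∧
      (∀ v : Fin n → ℝ, A.mulVec v = b → l1Norm w' ≤ l1Norm v) ∧
      Set.ncard {i : Fin n | w' i ≠ 0} < Set.ncard {i : Fin n | w i ≠ 0} := by
  classical
  set S : Finset (Fin n) := Finset.univ.filter (fun i => w i ≠ 0) with hS
  have hScoe : {i : Fin n | w i ≠ 0} = (S : Set (Fin n)) := by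
    ext i; simp [hS]
  have hScard : m < S.card := by
    rwa [hScoe, Set.ncard_coe_finset] at hcard
  -- linear dependence of the columns indexed by S
  have hnli : ¬ LinearIndependent ℝ (fun i : S => fun j => A j i) := by
    intro hli
    have := hli.fintype_card_le_finrank
    simp only [Fintype.card_coe, Module.finrank_fintype_fun_eq_card, Fintype.card_fin] at this
    omega
  obtain ⟨g, hgsum, i₁, hi₁⟩ := Fintype.not_linearIndependent_iff.mp hnli
  set z : Fin n → ℝ := fun i => if h : i ∈ S then g ⟨i, h⟩ else 0 with hzdef
  have hz0 : ∀ i, z i ≠ 0 → w i ≠ 0 := by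
    intro i hi
    by_contra hwi
    have : i ∉ S := by simp [hS, hwi]
    apply hi
    simp [hzdef, this]
  have hzne : z ≠ 0 := by
    intro h
    apply hi₁
    have := congrFun h i₁.1
    simpa [hzdef, i₁.2] using this
  have hAz : A.mulVec z = 0 := by
    funext j
    have hgj : ∑ i : S, g i * A j i = 0 := by
      have := congrFun hgsum j
      simpa [Finset.sum_apply] using this
    show ∑ i, A j i * z i = 0
    have h1 : ∑ i, A j i * z i = ∑ i ∈ S, A j i * z i := by
      rw [← Finset.sum_subset (Finset.subset_univ S)]
      intro i _ hiS
      simp [hzdef, hiS]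
    have h2 : ∑ i ∈ S, A j i * z i = ∑ i : S, A j i * z i :=
      (Finset.sum_coe_sort S (fun i => A j i * z i)).symm
    rw [h1, h2]
    rw [← hgj]
    apply Finset.sum_congr rfl
    intro i _
    simp [hzdef, i.2, mul_comm]
  have key : ∃ w' : Fin n → ℝ, A.mulVec w' = b ∧
      (∀ v : Fin n → ℝ, A.mulVec v = b → l1Norm w' ≤ l1Norm v) ∧
      {i : Fin n | w' i ≠ 0} ⊂ {i : Fin n | w i ≠ 0} := by
    rcases le_or_gt (∑ i, Real.sign (w i) * z i) 0 with hc | hc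
    · exact reduce_aux A b w z hw hmin hz0 hzne hAz hc
    · refine reduce_aux A b w (-z) hw hmin ?_ (neg_ne_zero.mpr hzne) ?_ ?_
      · intro i hi
        exact hz0 i (by simpa using hi)
      · rw [Matrix.mulVec_neg, hAz, neg_zero]
      · have : ∑ i, Real.sign (w i) * (-z) i = -∑ i, Real.sign (w i) * z i := by
          rw [← Finset.sum_neg_distrib]
          apply Finset.sum_congr rfl
          intro i _; simp
        rw [this]
        linarith
  obtain ⟨w', h1, h2, h3⟩ := key
  exact ⟨w', h1, h2, Set.ncard_lt_ncard h3 (Set.toFinite _)⟩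

/-- if `b` is in the range of the `m×n` matrix `A`, then there is a
minimizer of `‖w‖₁` over `{w : Aw = b}` with at most `m` nonzero coordinates. -/
theorem statement1 {m n : ℕ} (A : Matrix (Fin m) (Fin n) ℝ) (b : Fin m → ℝ)
    (hb : ∃ w : Fin n → ℝ, A.mulVec w = b) :
    ∃ wstar : Fin n → ℝ, A.mulVec wstar = b ∧
      (∀ v : Fin n → ℝ, A.mulVec v = b → l1Norm wstar ≤ l1Norm v) ∧
      Set.ncard {i : Fin n | wstar i ≠ 0} ≤ m := by
  classical
  obtain ⟨w₁, hw₁, hmin₁⟩ := exists_l1_minimizer A b hb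
  set P : ℕ → Prop := fun k => ∃ w : Fin n → ℝ, A.mulVec w = b ∧
      (∀ v : Fin n → ℝ, A.mulVec v = b → l1Norm w ≤ l1Norm v) ∧
      Set.ncard {i : Fin n | w i ≠ 0} ≤ k with hP
  have hPex : ∃ k, P k := ⟨_, w₁, hw₁, hmin₁, le_refl _⟩
  obtain ⟨w, hw, hmin, hcard⟩ := Nat.find_spec hPex
  refine ⟨w, hw, hmin, ?_⟩
  by_contra h
  push_neg at h
  obtain ⟨w', hw', hmin', hcard'⟩ := reduce A b w hw hmin h
  have hP' : P (Set.ncard {i : Fin n | w' i ≠ 0}) := ⟨w', hw', hmin', le_refl _⟩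
  exact Nat.find_min hPex (lt_of_lt_of_le hcard' hcard) hP'
end

section
/- Let P : ℝⁿ → ℝᵐ be continuously differentiable, let u, w ∈ ℝⁿ with P(u) ≠ 0, P'(u)w = P(u), let μ > 0 satisfy ‖w‖₁ ≤ ‖P(u)‖_∞/μ, let L > 0 be such that ‖(P'(a) − P'(b))v‖_∞ ≤ L‖a−b‖₁‖v‖₁ for all a, b on the segment joining u and u − γw and all v ∈ ℝⁿ, where γ = μ²/(L‖P(u)‖_∞), and assume γ ≤ 1. Then the damped Newton step satisfies ‖P(u − γw)‖_∞ ≤ ‖P(u)‖_∞ − μ²/(2L). -/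
lemma linfNorm_eq_norm {d : ℕ} (x : Fin d → ℝ) : linfNorm x = ‖x‖ := by
  unfold linfNorm
  rcases Nat.eq_zero_or_pos d with h | h
  · subst h
    rw [Subsingleton.elim x 0, Real.iSup_of_isEmpty, norm_zero]
  · haveI : Nonempty (Fin d) := ⟨⟨0, h⟩⟩
    apply le_antisymm
    · exact ciSup_le fun i => by
        simpa [Real.norm_eq_abs] using norm_le_pi_norm x i
    · have hnn : (0:ℝ) ≤ ⨆ i, |x i| := by
        have h := le_ciSup (f := fun i : Fin d => |x i|)
          (Set.Finite.bddAbove (Set.finite_range fun i : Fin d => |x i|)) (Classical.arbitrary (Fin d))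
        exact le_trans (abs_nonneg _) h
      refine (pi_norm_le_iff_of_nonneg hnn).mpr fun i => ?_
      rw [Real.norm_eq_abs]
      exact le_ciSup (f := fun j : Fin d => |x j|) (Set.Finite.bddAbove (Set.finite_range _)) i

lemma l1Norm_nonneg {d : ℕ} (x : Fin d → ℝ) : 0 ≤ l1Norm x :=
  Finset.sum_nonneg fun i _ => abs_nonneg _

lemma l1Norm_smul {d : ℕ} (t : ℝ) (x : Fin d → ℝ) :
    l1Norm (t • x) = |t| * l1Norm x := by
  simp [l1Norm, abs_mul, Finset.mul_sum]

/-- linear decrease of the residual for the damped Newton step with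
step-size `γ = μ²/(L‖P(u)‖_∞) ≤ 1`: `‖P(u − γw)‖_∞ ≤ ‖P(u)‖_∞ − μ²/(2L)`. -/
theorem statement5 {n m : ℕ} (P : (Fin n → ℝ) → (Fin m → ℝ)) (hP : ContDiff ℝ 1 P)
    (u w : Fin n → ℝ) (hPu : P u ≠ 0) (hw : fderiv ℝ P u w = P u)
    (μ : ℝ) (hμ : 0 < μ) (hwμ : l1Norm w ≤ linfNorm (P u) / μ)
    (L : ℝ) (hL : 0 < L) (γ : ℝ) (hγdef : γ = μ ^ 2 / (L * linfNorm (P u)))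
    (hγ1 : γ ≤ 1)
    (hLip : ∀ a ∈ segment ℝ u (u - γ • w), ∀ b ∈ segment ℝ u (u - γ • w),
      ∀ v : Fin n → ℝ,
      linfNorm ((fderiv ℝ P a - fderiv ℝ P b) v) ≤ L * l1Norm (a - b) * l1Norm v) :
    linfNorm (P (u - γ • w)) ≤ linfNorm (P u) - μ ^ 2 / (2 * L) := by
  set N : ℝ := linfNorm (P u) with hNdef
  have hN : 0 < N := by
    rw [hNdef, linfNorm_eq_norm]
    exact norm_pos_iff.mpr hPu
  have hγpos : 0 < γ := by
    rw [hγdef]; exact div_pos (pow_pos hμ 2) (mul_pos hL hN)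
  set v : Fin n → ℝ := γ • w with hvdef
  set C : ℝ := l1Norm w with hCdef
  have hC0 : 0 ≤ C := l1Norm_nonneg w
  set K : ℝ := L * γ ^ 2 * C ^ 2 with hKdef
  -- differentiability
  have hPdiff : ∀ x, HasFDerivAt P (fderiv ℝ P x) x := fun x =>
    (hP.differentiable one_ne_zero x).hasFDerivAt
  have hcurve : ∀ t : ℝ, HasDerivAt (fun s : ℝ => u - s • v) (-v) t := by
    intro t
    simpa using ((hasDerivAt_id t).smul_const v).const_sub u
  set f : ℝ → Fin m → ℝ := fun t => P (u - t • v) - P u + (t * γ) • P u with hfdef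
  set f' : ℝ → Fin m → ℝ := fun t => γ • P u - fderiv ℝ P (u - t • v) v with hf'def
  have hfderiv : ∀ t : ℝ, HasDerivAt f (f' t) t := by
    intro t
    have h1 : HasDerivAt (fun s : ℝ => P (u - s • v)) (fderiv ℝ P (u - t • v) (-v)) t :=
      (hPdiff (u - t • v)).comp_hasDerivAt t (hcurve t)
    have h2 : HasDerivAt (fun s : ℝ => (s * γ) • P u) (γ • P u) t := by
      simpa using ((hasDerivAt_id t).mul_const γ).smul_const (P u)
    have h := (h1.sub_const (P u)).add h2
    refine h.congr_deriv ?_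
    rw [hf'def]
    simp only [map_neg]
    abel
  -- segment membership
  have hmem : ∀ t : ℝ, t ∈ Set.Icc (0:ℝ) 1 → u - t • v ∈ segment ℝ u (u - γ • w) := by
    intro t ht
    refine ⟨1 - t, t, by linarith [ht.2], ht.1, by linarith [ht.2], ?_⟩
    rw [hvdef]
    module
  -- derivative bound
  have hbound : ∀ t ∈ Set.Ico (0:ℝ) 1, ‖f' t‖ ≤ K * t := by
    intro t ht
    have hts : t ∈ Set.Icc (0:ℝ) 1 := ⟨ht.1, le_of_lt ht.2⟩
    have key : f' t = -((fderiv ℝ P (u - t • v) - fderiv ℝ P u) v) := by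
      rw [hf'def]
      simp only [ContinuousLinearMap.sub_apply]
      have : fderiv ℝ P u v = γ • P u := by
        rw [hvdef, map_smul, hw]
      rw [this]; abel
    have hlip := hLip (u - t • v) (hmem t hts) u (left_mem_segment ℝ _ _) v
    have h1 : l1Norm (u - t • v - u) = t * (γ * C) := by
      have : u - t • v - u = (-(t * γ)) • w := by rw [hvdef]; module
      rw [this, l1Norm_smul, ← hCdef, abs_neg, abs_mul,
        abs_of_nonneg ht.1, abs_of_nonneg hγpos.le]
      ring
    have h2 : l1Norm v = γ * C := by
      rw [hvdef, l1Norm_smul, ← hCdef, abs_of_nonneg hγpos.le]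
    rw [h1, h2] at hlip
    have : ‖f' t‖ = linfNorm ((fderiv ℝ P (u - t • v) - fderiv ℝ P u) v) := by
      rw [key, linfNorm_eq_norm, norm_neg]
    rw [this]
    calc linfNorm ((fderiv ℝ P (u - t • v) - fderiv ℝ P u) v)
        ≤ L * (t * (γ * C)) * (γ * C) := hlip
      _ = K * t := by rw [hKdef]; ring
  -- mean value inequality
  have hB : ∀ t : ℝ, HasDerivAt (fun s => K / 2 * s ^ 2) (K * t) t := by
    intro t
    have := (hasDerivAt_pow 2 t).const_mul (K / 2)
    refine this.congr_deriv ?_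
    push_cast; ring
  have hf0 : f 0 = 0 := by simp [hfdef]
  have hmv := image_norm_le_of_norm_deriv_right_le_deriv_boundary
    (f := f) (f' := f') (a := 0) (b := 1)
    (fun t _ => (hfderiv t).continuousAt.continuousWithinAt)
    (fun t _ => (hfderiv t).hasDerivWithinAt)
    (B := fun s => K / 2 * s ^ 2) (B' := fun s => K * s)
    (by rw [hf0]; simp) hB hbound
  have hf1 : ‖f 1‖ ≤ K / 2 := by
    have := hmv (Set.mem_Icc.mpr ⟨zero_le_one, le_refl 1⟩)
    simpa using this
  -- rewrite f 1
  have hf1eq : f 1 = P (u - γ • w) - (1 - γ) • P u := by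
    rw [hfdef, hvdef]
    simp only [one_smul, one_mul]
    module
  have hmain : ‖P (u - γ • w)‖ ≤ (1 - γ) * N + K / 2 := by
    have h1 : P (u - γ • w) = f 1 + (1 - γ) • P u := by rw [hf1eq]; abel
    calc ‖P (u - γ • w)‖ = ‖f 1 + (1 - γ) • P u‖ := by rw [← h1]
      _ ≤ ‖f 1‖ + ‖(1 - γ) • P u‖ := norm_add_le _ _
      _ ≤ K / 2 + (1 - γ) * N := by
          rw [norm_smul, Real.norm_eq_abs, abs_of_nonneg (by linarith : (0:ℝ) ≤ 1 - γ)]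
          rw [hNdef, linfNorm_eq_norm]
          linarith [hf1]
      _ = (1 - γ) * N + K / 2 := by ring
  -- final arithmetic
  rw [linfNorm_eq_norm]
  have hγN : γ * (L * N) = μ ^ 2 := by
    rw [hγdef]; field_simp
  have hCN : C * μ ≤ N := by
    have := (le_div_iff₀ hμ).mp hwμ
    linarith
  have hK : K / 2 ≤ μ ^ 2 / (2 * L) := by
    rw [hKdef]
    rw [div_le_div_iff₀ (by norm_num) (by positivity)]
    have hnn : 0 ≤ L * γ * C := by positivity
    have h2 : L * γ * N = μ ^ 2 := by linear_combination hγN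
    have h1 : L * γ * C * μ ≤ μ * μ := by nlinarith [mul_le_mul_of_nonneg_left hCN (mul_nonneg hL.le hγpos.le)]
    have hLγC : L * γ * C ≤ μ := by
      have := le_of_mul_le_mul_right h1 hμ
      linarith
    nlinarith [mul_le_mul hLγC hLγC hnn hμ.le]
  have hγNval : γ * N = μ ^ 2 / L := by
    field_simp at hγN ⊢
    nlinarith [hγN]
  calc ‖P (u - γ • w)‖ ≤ (1 - γ) * N + K / 2 := hmain
    _ = N - γ * N + K / 2 := by ring
    _ ≤ N - μ ^ 2 / L + μ ^ 2 / (2 * L) := by rw [hγNval]; linarith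
    _ = N - μ ^ 2 / (2 * L) := by field_simp; ring
end
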